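/- Let I be a monomial ideal of S = K[t_1,…,t_s] with minimal primes p_1, …, p_r, and for each i let 𝔦_i = I S_{p_i} ∩ S be the p_i-primary component of I. Then I^{(n)} = 𝔦_1^n ∩ ⋯ ∩ 𝔦_r^n for all n ≥ 1. -/

import Mathlib

open MvPolynomial Pointwise

/-- The contraction `J S_p ∩ S` to `R` of the extension of an ideal `J` to the
localization of `R` at a prime ideal `p`. -/
noncomputable def contractAt {R : Type*} [CommRing R] (J p : Ideal R) (hp : p.IsPrime) :
    Ideal R :=
  letI := hp
  (J.map (algebraMap R (Localization.AtPrime p))).comap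
    (algebraMap R (Localization.AtPrime p))

/-- The `n`-th symbolic power `I^{(n)} = ⋂_{i=1}^r (Iⁿ S_{p_i} ∩ S)`, the intersection
being taken over the minimal primes `p_1, …, p_r` of `I`. -/
noncomputable def symbolicPower {R : Type*} [CommRing R] (I : Ideal R) (n : ℕ) : Ideal R :=
  ⨅ (p : Ideal R) (hp : p ∈ I.minimalPrimes), contractAt (I ^ n) p hp.1.1

/-- A monomial ideal: an ideal generated by monomials. -/
def IsMonomialIdeal {s : ℕ} {K : Type*} [Field K]
    (I : Ideal (MvPolynomial (Fin s) K)) : Prop :=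
  ∃ A : Set (Fin s →₀ ℕ), I = Ideal.span ((fun a => monomial a (1 : K)) '' A)

/-!
A minimal prime of a monomial ideal is generated by variables, `P = (X i : i ∈ τ)`. Localising
a monomial ideal `J` at `P` and contracting back sets the variables outside `τ` to `1`: the result
is the monomial ideal generated by the `τ`-parts of the exponents generating `J`. The inclusion
`⊆` says that every `u ∉ P` is a nonzerodivisor modulo an ideal generated by monomials in the
variables of `τ`, which follows by comparing extremal exponents. Taking `τ`-parts is additive, so
it commutes with forming `n`-fold sums of exponent sets, that is, with `n`-th powers of ideals.
-/

theorem mem_contractAt_iff {R : Type*} [CommRing R] {J p : Ideal R} (hp : p.IsPrime) {x : R} :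
    x ∈ contractAt J p hp ↔ ∃ u ∉ p, u * x ∈ J :=
  IsLocalization.algebraMap_mem_map_algebraMap_iff p.primeCompl _ J x

namespace Finsupp

variable {σ : Type*}

theorem filter_le_self (p : σ → Prop) [DecidablePred p] (c : σ →₀ ℕ) : c.filter p ≤ c := by
  intro i
  rw [filter_apply]
  split_ifs <;> simp

theorem le_filter_iff_of_support_subset {τ : Set σ} [DecidablePred (· ∈ τ)] {b : σ →₀ ℕ}
    (hb : ↑b.support ⊆ τ) {c : σ →₀ ℕ} : b ≤ c.filter (· ∈ τ) ↔ b ≤ c := by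
  refine ⟨fun h => h.trans (filter_le_self _ c), fun h i => ?_⟩
  rw [filter_apply]
  split_ifs with hi
  · exact h i
  · simp [notMem_support_iff.1 fun hib => hi (hb hib)]

end Finsupp

namespace MvPolynomial

variable {σ R : Type*}

theorem coeff_mul_of_forall_add_eq [CommSemiring R] {p q : MvPolynomial σ R} {a b : σ →₀ ℕ}
    (h : ∀ x ∈ p.support, ∀ y ∈ q.support, x + y = a + b → x = a ∧ y = b) :
    coeff (a + b) (p * q) = coeff a p * coeff b q := by
  classical
  rw [coeff_mul]
  refine Finset.sum_eq_single (a, b) (fun ⟨x, y⟩ hxy hne => ?_) (by simp)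
  by_contra hprod
  have hx : x ∈ p.support := mem_support_iff.2 (left_ne_zero_of_mul hprod)
  have hy : y ∈ q.support := mem_support_iff.2 (right_ne_zero_of_mul hprod)
  obtain ⟨rfl, rfl⟩ := h x hx y hy (Finset.HasAntidiagonal.mem_antidiagonal.1 hxy)
  exact hne rfl

theorem exists_mem_support_filter_eq_zero [CommSemiring R] {τ : Set σ} [DecidablePred (· ∈ τ)]
    {u : MvPolynomial σ R} (hu : u ∉ Ideal.span (X '' τ)) :
    ∃ e ∈ u.support, e.filter (· ∈ τ) = 0 := by
  simp only [mem_ideal_span_X_image, not_forall, not_exists, not_and, not_not] at hu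
  obtain ⟨e, he, h⟩ := hu
  exact ⟨e, he, (Finsupp.filter_eq_zero_iff _ _).2 h⟩

theorem mem_span_monomial_of_mul_mem [CommSemiring R] [NoZeroDivisors R] {τ : Set σ}
    {B : Set (σ →₀ ℕ)} (hB : ∀ b ∈ B, ↑b.support ⊆ τ) {u f : MvPolynomial σ R}
    (hu : u ∉ Ideal.span (X '' τ))
    (huf : u * f ∈ Ideal.span ((fun b => monomial b (1 : R)) '' B)) :
    f ∈ Ideal.span ((fun b => monomial b (1 : R)) '' B) := by
  classical
  let _ : LinearOrder σ := IsWellOrder.linearOrder WellOrderingRel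
  let π : (σ →₀ ℕ) →+ (σ →₀ ℕ) := Finsupp.filterAddHom (· ∈ τ)
  have hπ_le (c : σ →₀ ℕ) : π c ≤ c := Finsupp.filter_le_self _ c
  have hle_π_iff {c : σ →₀ ℕ} {b : σ →₀ ℕ} (hb : b ∈ B) : b ≤ π c ↔ b ≤ c :=
    Finsupp.le_filter_iff_of_support_subset (hB b hb)
  rw [mem_ideal_span_monomial_image] at huf ⊢
  by_contra! hf
  set bad := f.support.filter fun c => ∀ b ∈ B, ¬b ≤ c
  obtain ⟨c₀, hc₀, hc₀_min⟩ := bad.exists_min_image (fun c => toLex (π c))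
    (by obtain ⟨c, hc, h⟩ := hf; exact ⟨c, Finset.mem_filter.2 ⟨hc, h⟩⟩)
  obtain ⟨c, hc, hc_max⟩ := (bad.filter fun c => π c = π c₀).exists_max_image toLex
    ⟨c₀, Finset.mem_filter.2 ⟨hc₀, rfl⟩⟩
  obtain ⟨e, he, he_max⟩ := (u.support.filter fun e => π e = 0).exists_max_image toLex
    (by obtain ⟨e, he, h⟩ := exists_mem_support_filter_eq_zero hu
        exact ⟨e, Finset.mem_filter.2 ⟨he, h⟩⟩)
  simp only [bad, Finset.mem_filter] at hc₀ hc he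
  -- `e + c` is a bad exponent of `u * f` that arises from a single product of terms
  have hunique : ∀ x ∈ u.support, ∀ y ∈ f.support, x + y = e + c → x = e ∧ y = c := by
    intro x hx y hy hxy
    have hπxy : π x + π y = π c := by rw [← map_add, hxy, map_add, he.2, zero_add]
    have hπy_le : π y ≤ π c := hπxy ▸ le_add_self
    have hy_bad : ∀ b ∈ B, ¬b ≤ y := fun b hb hby =>
      hc.1.2 b hb (((hle_π_iff hb).2 hby).trans hπy_le |>.trans (hπ_le c))
    have hπy : π y = π c := toLex_inj.1 <| le_antisymm (Finsupp.toLex_monotone hπy_le)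
      (hc.2 ▸ hc₀_min y (Finset.mem_filter.2 ⟨hy, hy_bad⟩))
    have hπx : π x = 0 := by rwa [hπy, add_eq_right] at hπxy
    have := (add_eq_add_iff_eq_and_eq (he_max x (Finset.mem_filter.2 ⟨hx, hπx⟩))
      (hc_max y (Finset.mem_filter.2 ⟨Finset.mem_filter.2 ⟨hy, hy_bad⟩, hπy.trans hc.2⟩))).1
      (congrArg toLex hxy)
    exact ⟨toLex_inj.1 this.1, toLex_inj.1 this.2⟩
  have hec : e + c ∈ (u * f).support := by
    rw [mem_support_iff, coeff_mul_of_forall_add_eq hunique]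
    exact mul_ne_zero (mem_support_iff.1 he.1) (mem_support_iff.1 hc.1.1)
  obtain ⟨b, hb, hbec⟩ := huf _ hec
  rw [← hle_π_iff hb, map_add, he.2, zero_add, hle_π_iff hb] at hbec
  exact hc.1.2 b hb hbec

theorem isPrime_span_X_image [CommSemiring R] [NoZeroDivisors R] [Nontrivial R] (τ : Set σ) :
    (Ideal.span (X '' τ : Set (MvPolynomial σ R))).IsPrime := by
  classical
  have hspan : Ideal.span (X '' τ : Set (MvPolynomial σ R)) =
      Ideal.span ((fun b => monomial b (1 : R)) '' ((fun i => Finsupp.single i 1) '' τ)) := by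
    rw [Set.image_image]
    rfl
  refine ⟨?_, fun {f g} hfg => or_iff_not_imp_left.2 fun hf => ?_⟩
  · rw [Ideal.ne_top_iff_one, mem_ideal_span_X_image]
    simp
  · rw [hspan] at hfg ⊢
    refine mem_span_monomial_of_mul_mem ?_ hf hfg
    rintro _ ⟨i, hi, rfl⟩
    simpa using hi

theorem eq_span_X_of_mem_minimalPrimes [CommSemiring R] [NoZeroDivisors R] [Nontrivial R]
    {A : Set (σ →₀ ℕ)} {p : Ideal (MvPolynomial σ R)}
    (hp : p ∈ (Ideal.span ((fun a => monomial a (1 : R)) '' A)).minimalPrimes) :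
    p = Ideal.span (X '' {i | X i ∈ p}) := by
  classical
  have hle : Ideal.span (X '' {i | X i ∈ p}) ≤ p :=
    Ideal.span_le.2 (by rintro _ ⟨i, hi, rfl⟩; exact hi)
  refine le_antisymm (hp.2 ⟨isPrime_span_X_image _, Ideal.span_le.2 ?_⟩ hle) hle
  rintro _ ⟨a, ha, rfl⟩
  have hprime := hp.1.1
  have hmem : monomial a (1 : R) ∈ p := hp.1.2 (Ideal.subset_span ⟨a, ha, rfl⟩)
  rw [monomial_eq, map_one, one_mul, Finsupp.prod, Ideal.IsPrime.prod_mem_iff] at hmem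
  obtain ⟨i, hi, hXi⟩ := hmem
  rw [SetLike.mem_coe, mem_ideal_span_X_image]
  intro c hc
  rw [support_monomial, if_neg one_ne_zero, Finset.mem_singleton] at hc
  exact ⟨i, hprime.mem_of_pow_mem _ hXi, hc ▸ Finsupp.mem_support_iff.1 hi⟩

theorem span_monomial_mul [CommSemiring R] (A B : Set (σ →₀ ℕ)) :
    Ideal.span ((fun a => monomial a (1 : R)) '' A) *
        Ideal.span ((fun a => monomial a (1 : R)) '' B) =
      Ideal.span ((fun a => monomial a (1 : R)) '' (A + B)) := by
  rw [Ideal.span_mul_span', ← Set.image2_mul, ← Set.image2_add, Set.image2_image_left,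
    Set.image2_image_right, Set.image_image2]
  simp only [monomial_mul, mul_one]

theorem span_monomial_pow [CommSemiring R] (A : Set (σ →₀ ℕ)) (n : ℕ) :
    Ideal.span ((fun a => monomial a (1 : R)) '' A) ^ n =
      Ideal.span ((fun a => monomial a (1 : R)) '' (n • A)) := by
  induction n with
  | zero => simp [Ideal.one_eq_top]
  | succ n ih => rw [pow_succ, ih, span_monomial_mul, succ_nsmul]

theorem contractAt_span_monomial [CommRing R] [IsDomain R] (τ : Set σ) [DecidablePred (· ∈ τ)]
    (A : Set (σ →₀ ℕ)) :
    contractAt (Ideal.span ((fun a => monomial a (1 : R)) '' A)) (Ideal.span (X '' τ))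
        (isPrime_span_X_image τ) =
      Ideal.span ((fun a => monomial a (1 : R)) '' (Finsupp.filterAddHom (· ∈ τ) '' A)) := by
  refine le_antisymm (fun f hf => ?_) (Ideal.span_le.2 ?_)
  · obtain ⟨u, hu, huf⟩ := (mem_contractAt_iff _).1 hf
    refine mem_span_monomial_of_mul_mem ?_ hu ?_
    · rintro _ ⟨a, -, rfl⟩
      simp only [Finsupp.filterAddHom, AddMonoidHom.coe_mk, ZeroHom.coe_mk, Finsupp.support_filter,
        Finset.coe_filter]
      exact fun _ hi => hi.2
    · rw [mem_ideal_span_monomial_image] at huf ⊢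
      intro c hc
      obtain ⟨a, ha, hac⟩ := huf c hc
      exact ⟨_, ⟨a, ha, rfl⟩, (Finsupp.filter_le_self _ a).trans hac⟩
  · rintro _ ⟨_, ⟨a, ha, rfl⟩, rfl⟩
    refine (mem_contractAt_iff _).2 ⟨monomial (a.filter (· ∉ τ)) 1, ?_, ?_⟩
    · rw [mem_ideal_span_X_image]
      push Not
      exact ⟨a.filter (· ∉ τ), by classical simp [coeff_monomial], fun i hi => by simp [hi]⟩
    · rw [monomial_mul, one_mul, add_comm]
      exact Ideal.subset_span ⟨a, ha, by simp [Finsupp.filterAddHom]⟩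

theorem contractAt_pow_of_mem_minimalPrimes [CommRing R] [IsDomain R] {A : Set (σ →₀ ℕ)}
    {p : Ideal (MvPolynomial σ R)}
    (hp : p ∈ (Ideal.span ((fun a => monomial a (1 : R)) '' A)).minimalPrimes) (n : ℕ) :
    contractAt (Ideal.span ((fun a => monomial a (1 : R)) '' A) ^ n) p hp.1.1 =
      contractAt (Ideal.span ((fun a => monomial a (1 : R)) '' A)) p hp.1.1 ^ n := by
  classical
  obtain ⟨τ, rfl⟩ : ∃ τ, p = Ideal.span (X '' τ) := ⟨_, eq_span_X_of_mem_minimalPrimes hp⟩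
  rw [span_monomial_pow, contractAt_span_monomial, contractAt_span_monomial, span_monomial_pow,
    Set.image_nsmul]

end MvPolynomial

/-- **Lemma.** Let `I` be a monomial ideal of `S = K[t_1,…,t_s]` with minimal primes
`p_1, …, p_r`, and let `𝔦_i = I S_{p_i} ∩ S` be the `p_i`-primary component of `I`.
Then `I^{(n)} = 𝔦_1ⁿ ∩ ⋯ ∩ 𝔦_rⁿ` for all `n ≥ 1`. -/
theorem symbolicPower_eq_iInf_pow_primaryComponent {s : ℕ} (K : Type*) [Field K]
    (I : Ideal (MvPolynomial (Fin s) K)) (hI : IsMonomialIdeal I) :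
    ∀ n : ℕ, 1 ≤ n →
      symbolicPower I n =
        ⨅ (p : Ideal (MvPolynomial (Fin s) K)) (hp : p ∈ I.minimalPrimes),
          (contractAt I p hp.1.1) ^ n := by
  intro n _
  obtain ⟨A, rfl⟩ := hI
  exact iInf_congr fun p => iInf_congr fun hp =>
    MvPolynomial.contractAt_pow_of_mem_minimalPrimes hp n
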